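/- Discrete total momentum conservation for the fully discrete Fourier–Hermite scheme: Assume N_v ≥ 1. Suppose that for every species s ∈ S the fully discrete Fourier–Hermite Vlasov equations hold for all 0 ≤ n ≤ N_v and −N_x ≤ k ≤ N_x, and that the discrete Poisson equations hold at both time levels j and j+1. Then the discrete total momentum is conserved: Σ_{s∈S} m^s·α^s·L·(u^s·Ĉ^{s,j+1}_{0,0} + (α^s/√2)·Ĉ^{s,j+1}_{1,0}) = Σ_{s∈S} m^s·α^s·L·(u^s·Ĉ^{s,j}_{0,0} + (α^s/√2)·Ĉ^{s,j}_{1,0}). -/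
import Mathlib


open Finset

/-- Implicit midpoint value `X^{j+1/2} = (X^j + X^{j+1})/2`. -/
noncomputable def midpt (a b : ℂ) : ℂ := (a + b) / 2

/-- The fully discrete Fourier–Hermite Vlasov equation with implicit midpoint
time stepping at index `(n,k)` for one species with mass `ms`, charge `qs`, and
Hermite parameters `αs`, `us`.  `Cj Cj1 : ℤ → ℤ → ℂ` are the Hermite–Fourier
coefficients of the distribution function at time levels `j` and `j+1`, and
`Ej Ej1 : ℤ → ℂ` those of the electric field. -/
noncomputable def vlasovEq (Nx : ℕ) (L Δt ms qs αs us : ℝ)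
    (Cj Cj1 : ℤ → ℤ → ℂ) (Ej Ej1 : ℤ → ℂ) (n k : ℤ) : Prop :=
  (Cj1 n k - Cj n k) / (Δt : ℂ)
    + (Real.sqrt ((n : ℝ) / 2) : ℂ) * (2 * (Real.pi : ℂ) * Complex.I * (k : ℂ) / (L : ℂ)) *
        (αs : ℂ) * midpt (Cj (n - 1) k) (Cj1 (n - 1) k)
    + (2 * (Real.pi : ℂ) * Complex.I * (k : ℂ) / (L : ℂ)) * (us : ℂ) *
        midpt (Cj n k) (Cj1 n k)
    + (Real.sqrt (((n : ℝ) + 1) / 2) : ℂ) * (2 * (Real.pi : ℂ) * Complex.I * (k : ℂ) / (L : ℂ)) *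
        (αs : ℂ) * midpt (Cj (n + 1) k) (Cj1 (n + 1) k)
    - (Real.sqrt (2 * (n : ℝ)) : ℂ) * ((qs : ℂ) / ((ms : ℂ) * (αs : ℂ))) *
        ∑ ℓ ∈ Finset.Icc (-(Nx : ℤ)) (Nx : ℤ),
          midpt (Cj (n - 1) ℓ) (Cj1 (n - 1) ℓ) * midpt (Ej (k - ℓ)) (Ej1 (k - ℓ))
    = 0

/-- Discrete total momentum conservation for the fully discrete
Fourier–Hermite scheme. -/
theorem discrete_momentum_conservation {σ : Type*} (S : Finset σ)
    (Nv Nx : ℕ) (hNv : 1 ≤ Nv) (L Δt : ℝ) (hL : 0 < L) (hΔt : 0 < Δt)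
    (ms qs αs us : σ → ℝ) (hms : ∀ s ∈ S, 0 < ms s) (hαs : ∀ s ∈ S, 0 < αs s)
    (Cj Cj1 : σ → ℤ → ℤ → ℂ) (Ej Ej1 : ℤ → ℂ)
    (hCjlo : ∀ s ∈ S, ∀ k : ℤ, Cj s (-1) k = 0) (hCj1lo : ∀ s ∈ S, ∀ k : ℤ, Cj1 s (-1) k = 0)
    (hCjhi : ∀ s ∈ S, ∀ k : ℤ, Cj s ((Nv : ℤ) + 1) k = 0)
    (hCj1hi : ∀ s ∈ S, ∀ k : ℤ, Cj1 s ((Nv : ℤ) + 1) k = 0)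
    (hEj : ∀ k : ℤ, (Nx : ℤ) < |k| → Ej k = 0) (hEj1 : ∀ k : ℤ, (Nx : ℤ) < |k| → Ej1 k = 0)
    (hVlasov : ∀ s ∈ S, ∀ n k : ℤ, 0 ≤ n → n ≤ (Nv : ℤ) → -(Nx : ℤ) ≤ k → k ≤ (Nx : ℤ) →
      vlasovEq Nx L Δt (ms s) (qs s) (αs s) (us s) (Cj s) (Cj1 s) Ej Ej1 n k)
    (hPoisson0j : Ej 0 = 0) (hPoisson0j1 : Ej1 0 = 0)
    (hPoissonj : ∀ k : ℤ, 1 ≤ |k| → |k| ≤ (Nx : ℤ) →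
      (2 * (Real.pi : ℂ) * Complex.I * (k : ℂ) / (L : ℂ)) * Ej k
        = ∑ s ∈ S, (qs s : ℂ) * (αs s : ℂ) * Cj s 0 k)
    (hPoissonj1 : ∀ k : ℤ, 1 ≤ |k| → |k| ≤ (Nx : ℤ) →
      (2 * (Real.pi : ℂ) * Complex.I * (k : ℂ) / (L : ℂ)) * Ej1 k
        = ∑ s ∈ S, (qs s : ℂ) * (αs s : ℂ) * Cj1 s 0 k) :
    (∑ s ∈ S, (ms s : ℂ) * (αs s : ℂ) * (L : ℂ) *
        ((us s : ℂ) * Cj1 s 0 0 + ((αs s : ℂ) / (Real.sqrt 2 : ℂ)) * Cj1 s 1 0))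
      = ∑ s ∈ S, (ms s : ℂ) * (αs s : ℂ) * (L : ℂ) *
        ((us s : ℂ) * Cj s 0 0 + ((αs s : ℂ) / (Real.sqrt 2 : ℂ)) * Cj s 1 0) := by
  have hΔt' : (Δt : ℂ) ≠ 0 := by exact_mod_cast hΔt.ne'
  have hL' : (L : ℂ) ≠ 0 := by exact_mod_cast hL.ne'
  have hs2 : (Real.sqrt 2 : ℂ) ≠ 0 := by
    exact_mod_cast (Real.sqrt_pos.mpr (by norm_num : (0:ℝ) < 2)).ne'
  set mE : ℤ → ℂ := fun k => midpt (Ej k) (Ej1 k) with hmE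
  set F : σ → ℂ := fun s => ∑ ℓ ∈ Finset.Icc (-(Nx:ℤ)) (Nx:ℤ),
      midpt (Cj s 0 ℓ) (Cj1 s 0 ℓ) * mE (0 - ℓ) with hF
  -- n = 0, k = 0 Vlasov equation: C_{0,0} is conserved per species
  have h0 : ∀ s ∈ S, Cj1 s 0 0 = Cj s 0 0 := by
    intro s hs
    have h := hVlasov s hs 0 0 le_rfl (by exact_mod_cast Nat.zero_le Nv) (by simp) (by simp)
    unfold vlasovEq at h
    simp only [Int.cast_zero, mul_zero, zero_mul, zero_div, mul_zero, add_zero, zero_add,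
      Real.sqrt_zero, Complex.ofReal_zero, zero_mul, sub_zero, mul_zero] at h
    have := (div_eq_zero_iff.mp h).resolve_right hΔt'
    linear_combination this
  -- n = 1, k = 0 Vlasov equation
  have h1 : ∀ s ∈ S, Cj1 s 1 0 = Cj s 1 0
      + (Δt : ℂ) * ((Real.sqrt 2 : ℂ) * ((qs s : ℂ) / ((ms s : ℂ) * (αs s : ℂ))) * F s) := by
    intro s hs
    have h := hVlasov s hs 1 0 (by norm_num) (by exact_mod_cast hNv) (by simp) (by simp)
    unfold vlasovEq at h
    simp only [Int.cast_zero, mul_zero, zero_mul, zero_div, mul_zero, add_zero, zero_add,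
      sub_zero] at h
    norm_num at h
    have h' : (Cj1 s 1 0 - Cj s 1 0) / (Δt : ℂ)
        = (Real.sqrt 2 : ℂ) * ((qs s : ℂ) / ((ms s : ℂ) * (αs s : ℂ))) * F s := by
      rw [sub_eq_zero] at h
      rw [h, hF]
      simp [mE, zero_sub]
    field_simp at h'
    linear_combination h'
  -- Poisson at the midpoint
  have hPmid : ∀ ℓ : ℤ, 1 ≤ |ℓ| → |ℓ| ≤ (Nx : ℤ) →
      ∑ s ∈ S, (qs s : ℂ) * (αs s : ℂ) * midpt (Cj s 0 ℓ) (Cj1 s 0 ℓ)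
        = (2 * (Real.pi : ℂ) * Complex.I * (ℓ : ℂ) / (L : ℂ)) * mE ℓ := by
    intro ℓ hl1 hl2
    have e1 := hPoissonj ℓ hl1 hl2
    have e2 := hPoissonj1 ℓ hl1 hl2
    simp only [midpt, mE]
    have : ∑ s ∈ S, (qs s : ℂ) * (αs s : ℂ) * ((Cj s 0 ℓ + Cj1 s 0 ℓ) / 2)
        = ((∑ s ∈ S, (qs s : ℂ) * (αs s : ℂ) * Cj s 0 ℓ)
          + ∑ s ∈ S, (qs s : ℂ) * (αs s : ℂ) * Cj1 s 0 ℓ) / 2 := by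
      rw [← Finset.sum_add_distrib, Finset.sum_div]
      exact Finset.sum_congr rfl fun s _ => by ring
    rw [this, ← e1, ← e2]
    ring
  -- the key cancellation
  have hkey : ∑ s ∈ S, (qs s : ℂ) * (αs s : ℂ) * F s = 0 := by
    have swap : ∑ s ∈ S, (qs s : ℂ) * (αs s : ℂ) * F s
        = ∑ ℓ ∈ Finset.Icc (-(Nx:ℤ)) (Nx:ℤ),
            (∑ s ∈ S, (qs s : ℂ) * (αs s : ℂ) * midpt (Cj s 0 ℓ) (Cj1 s 0 ℓ)) * mE (0 - ℓ) := by
      simp only [hF, Finset.mul_sum]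
      rw [Finset.sum_comm]
      exact Finset.sum_congr rfl fun ℓ _ => by
        rw [Finset.sum_mul]; exact Finset.sum_congr rfl fun s _ => by ring
    rw [swap]
    have step : ∀ ℓ ∈ Finset.Icc (-(Nx:ℤ)) (Nx:ℤ),
        (∑ s ∈ S, (qs s : ℂ) * (αs s : ℂ) * midpt (Cj s 0 ℓ) (Cj1 s 0 ℓ)) * mE (0 - ℓ)
          = (2 * (Real.pi : ℂ) * Complex.I * (ℓ : ℂ) / (L : ℂ)) * mE ℓ * mE (-ℓ) := by
      intro ℓ hℓ
      rcases eq_or_ne ℓ 0 with rfl | hne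
      · simp [mE, midpt, hPoisson0j, hPoisson0j1]
      · rw [Finset.mem_Icc] at hℓ
        rw [hPmid ℓ (Int.one_le_abs hne) (abs_le.mpr hℓ), zero_sub]
      
    rw [Finset.sum_congr rfl step]
    refine Finset.sum_involution (fun ℓ _ => -ℓ) (fun ℓ hℓ => ?_) (fun ℓ hℓ hne => ?_)
      (fun ℓ hℓ => ?_) (fun ℓ hℓ => neg_neg ℓ)
    · push_cast
      ring
    · show -ℓ ≠ ℓ
      rcases eq_or_ne ℓ 0 with rfl | h
      · exact absurd (by simp) hne
      · intro hc; exact h (by omega)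
    · show -ℓ ∈ Finset.Icc (-(Nx:ℤ)) (Nx:ℤ)
      rw [Finset.mem_Icc] at hℓ ⊢; omega
  -- assemble
  rw [← sub_eq_zero, ← Finset.sum_sub_distrib]
  have final : ∀ s ∈ S,
      (ms s : ℂ) * (αs s : ℂ) * (L : ℂ) *
          ((us s : ℂ) * Cj1 s 0 0 + ((αs s : ℂ) / (Real.sqrt 2 : ℂ)) * Cj1 s 1 0)
        - (ms s : ℂ) * (αs s : ℂ) * (L : ℂ) *
          ((us s : ℂ) * Cj s 0 0 + ((αs s : ℂ) / (Real.sqrt 2 : ℂ)) * Cj s 1 0)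
        = (Δt : ℂ) * (L : ℂ) * ((qs s : ℂ) * (αs s : ℂ) * F s) := by
    intro s hs
    have hm : (ms s : ℂ) ≠ 0 := by exact_mod_cast (hms s hs).ne'
    have ha : (αs s : ℂ) ≠ 0 := by exact_mod_cast (hαs s hs).ne'
    rw [h0 s hs, h1 s hs]
    field_simp
    ring
  rw [Finset.sum_congr rfl final, ← Finset.mul_sum, hkey, mul_zero]
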